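/- Consider the Game of Graph Nim on the graph H₁ with vertices A, B, C, D, E, F and edges AB, BC, CD, EF (a path A–B–C–D together with a disjoint edge EF), with all edge weights positive. If w(AB) ≤ w(EF) ≤ w(AB) + w(BC), then the configuration is a winning position for the first player. -/
import Mathlib


namespace GraphNim

variable {V E : Type} [Fintype E]

/-- A legal move in the Game of Graph Nim: choose a vertex `v` and weakly decrease
the weights of edges incident to `v` (all other edges unchanged), strictly
decreasing the total weight. -/
def Move (inc : V → E → Prop) (w w' : E → ℕ) : Prop :=
  ∃ v : V, (∀ e, w' e ≤ w e) ∧ (∀ e, ¬ inc v e → w' e = w e) ∧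
    (∑ e, w' e) < (∑ e, w e)

/-- A configuration is losing for the player to move: every legal move leads to a
non-losing configuration (the all-zero configuration is vacuously losing). -/
def Losing (inc : V → E → Prop) (w : E → ℕ) : Prop :=
  ∀ w', Move inc w w' → ¬ Losing inc w'
termination_by ∑ e, w e
decreasing_by
  rename_i h
  obtain ⟨v, _, _, h3⟩ := h
  exact h3

/-- A configuration is winning for the player to move: some legal move leads to a
losing configuration. -/
def Winning (inc : V → E → Prop) (w : E → ℕ) : Prop :=
  ∃ w', Move inc w w' ∧ Losing inc w'

end GraphNim

open GraphNim

/-- Endpoints of the edges of the graph `H₁` (path `A–B–C–D` plus a disjoint edge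
`EF`): vertices `A = 0, …, F = 5`, edges `AB = 0, BC = 1, CD = 2, EF = 3`. -/
def h1Ends : Fin 4 → Fin 6 × Fin 6
  | 0 => (0, 1)
  | 1 => (1, 2)
  | 2 => (2, 3)
  | 3 => (4, 5)

def h1Inc (v : Fin 6) (e : Fin 4) : Prop := (h1Ends e).1 = v ∨ (h1Ends e).2 = v

/-- From a position with `w 2 = 0` and `w 0 + w 1 ≠ w 3`, there is a move back
into the set `{w : w 2 = 0 ∧ w 0 + w 1 = w 3}`. -/
lemma h1_respond (w : Fin 4 → ℕ) (h2 : w 2 = 0) (hne : w 0 + w 1 ≠ w 3) :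
    ∃ w', Move h1Inc w w' ∧ w' 2 = 0 ∧ w' 0 + w' 1 = w' 3 := by
  rcases lt_or_gt_of_ne hne with h | h
  · -- respond at vertex E (4): lower the weight of edge 3 to w 0 + w 1
    refine ⟨fun e => if e = 3 then w 0 + w 1 else w e, ⟨4, ?_, ?_, ?_⟩, by simpa using h2, by simp⟩
    · intro e; fin_cases e <;> simp <;> omega
    · intro e he; fin_cases e
      · rfl
      · rfl
      · rfl
      · exact absurd (by unfold h1Inc h1Ends; decide) he
    · rw [Fin.sum_univ_four, Fin.sum_univ_four]; simp only [reduceIte,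
        show (0:Fin 4) ≠ 3 by decide, show (1:Fin 4) ≠ 3 by decide,
        show (2:Fin 4) ≠ 3 by decide, if_neg, if_true]; omega
  · -- respond at vertex B (1): change edges 0 and 1 so that their sum is w 3
    refine ⟨fun e => if e = 0 then min (w 3) (w 0) else if e = 1 then w 3 - min (w 3) (w 0)
      else w e, ⟨1, ?_, ?_, ?_⟩, by simpa using h2, by simp <;> omega⟩
    · intro e; fin_cases e <;> simp <;> omega
    · intro e he; fin_cases e
      · exact absurd (by unfold h1Inc h1Ends; decide) he
      · exact absurd (by unfold h1Inc h1Ends; decide) he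
      · rfl
      · rfl
    · rw [Fin.sum_univ_four, Fin.sum_univ_four]; simp; omega

/-- Positions with `w 2 = 0` and `w 0 + w 1 = w 3` are losing. -/
lemma h1_losing (n : ℕ) : ∀ w : Fin 4 → ℕ, (∑ e, w e) = n → w 2 = 0 →
    w 0 + w 1 = w 3 → Losing h1Inc w := by
  induction n using Nat.strong_induction_on with
  | _ n ih =>
    intro w hsum h2 h13
    rw [Losing]
    rintro w' ⟨v, hle, heq, hlt⟩ hL
    rw [Losing] at hL
    -- in every case we derive the key facts about w'
    have key : w' 2 = 0 ∧ w' 0 + w' 1 ≠ w' 3 := by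
      have hs : w' 0 + w' 1 + w' 2 + w' 3 < w 0 + w 1 + w 2 + w 3 := by
        rw [Fin.sum_univ_four, Fin.sum_univ_four] at hlt; omega
      have l0 := hle 0; have l1 := hle 1; have l2 := hle 2; have l3 := hle 3
      fin_cases v
      · have e1 := heq 1 (by unfold h1Inc h1Ends; decide)
        have e2 := heq 2 (by unfold h1Inc h1Ends; decide)
        have e3 := heq 3 (by unfold h1Inc h1Ends; decide)
        omega
      · have e2 := heq 2 (by unfold h1Inc h1Ends; decide)
        have e3 := heq 3 (by unfold h1Inc h1Ends; decide)
        omega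
      · have e0 := heq 0 (by unfold h1Inc h1Ends; decide)
        have e3 := heq 3 (by unfold h1Inc h1Ends; decide)
        omega
      · -- vertex D: only edge 2 is incident, but w 2 = 0, so no strict decrease
        have e0 := heq 0 (by unfold h1Inc h1Ends; decide)
        have e1 := heq 1 (by unfold h1Inc h1Ends; decide)
        have e3 := heq 3 (by unfold h1Inc h1Ends; decide)
        omega
      · have e0 := heq 0 (by unfold h1Inc h1Ends; decide)
        have e1 := heq 1 (by unfold h1Inc h1Ends; decide)
        have e2 := heq 2 (by unfold h1Inc h1Ends; decide)
        omega
      · have e0 := heq 0 (by unfold h1Inc h1Ends; decide)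
        have e1 := heq 1 (by unfold h1Inc h1Ends; decide)
        have e2 := heq 2 (by unfold h1Inc h1Ends; decide)
        omega
    obtain ⟨w'', mv, h2'', h13''⟩ := h1_respond w' key.1 key.2
    have hlt'' : (∑ e, w'' e) < n := by
      obtain ⟨_, _, _, hl⟩ := mv
      omega
    exact hL w'' mv (ih _ hlt'' w'' rfl h2'' h13'')

/-- On `H₁`, if `w(AB) ≤ w(EF) ≤ w(AB) + w(BC)` (all weights positive), the
configuration is winning for the first player. -/
theorem h1_winning_between (w : Fin 4 → ℕ) (hpos : ∀ e, 0 < w e)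
    (hlo : w 0 ≤ w 3) (hhi : w 3 ≤ w 0 + w 1) :
    Winning h1Inc w := by
  -- move at vertex C (2): set edge 1 to w 3 - w 0 and edge 2 to 0
  refine ⟨fun e => if e = 1 then w 3 - w 0 else if e = 2 then 0 else w e,
    ⟨2, ?_, ?_, ?_⟩, h1_losing _ _ rfl (by simp) (by simp; omega)⟩
  · intro e; fin_cases e <;> simp <;> omega
  · intro e he; fin_cases e
    · rfl
    · exact absurd (by unfold h1Inc h1Ends; decide) he
    · exact absurd (by unfold h1Inc h1Ends; decide) he
    · rfl
  · have h2 := hpos 2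
    rw [Fin.sum_univ_four, Fin.sum_univ_four]; simp; omega
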